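/- arXiv:1703.00718 — 2 statements merged into one kernel-verified Lean document; each statement's English description precedes it below -/
import Mathlib

section
/- Let K/F be a finite Galois field extension with norm N_{K/F}, σ ∈ Gal(K/F) of order n with Fix(σ) = F, and suppose σ commutes with every τ ∈ Gal(K/F). Let n ≥ m−1 and f(t) = t^m − a_0 ∈ K[t;σ] with a_0 ∈ K∖F. Then H is an F-algebra automorphism of S_f if and only if H = H_{τ,k} for some τ ∈ Gal(K/F) and k ∈ K^× with τ(a_0) = (∏_{l=0}^{m−1} σ^l(k))·a_0; for any such k, N_{K/F}(k) is an m-th root of unity. -/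
/-! ## The Petit algebra `S_f = K[t;σ]/K[t;σ]f`

For a twisted polynomial ring `R = K[t;σ]` (multiplication determined by `t·a = σ(a)·t`)
and the monic skew polynomial `f(t) = t^m - Σ_{i<m} a_i t^i` (encoded by its coefficient
vector `a : Fin m → K`), the Petit algebra `S_f` is realised on coefficient vectors
`Fin m → K` (the polynomials of degree `< m`), with multiplication `g ∘ h = (gh) mod_r f`. -/

/-- The remainder of `t^s` after right division by `f(t) = t^m - Σ_{i<m} a_i t^i`:
for `s < m` it is `t^s` itself, and for `s ≥ m` one uses
`t^s ≡ Σ_i σ^{s-m}(a_i) t^{s-m+i} (mod R·f)`. -/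
noncomputable def tred {K : Type*} [Field K] (σ : K → K) (m : ℕ) (a : Fin m → K) (s : ℕ) :
    Fin m → K :=
  if _h : s < m then (fun i => if (i : ℕ) = s then (1 : K) else 0)
  else ∑ i : Fin m, σ^[s - m] (a i) • tred σ m a (s - m + (i : ℕ))
termination_by s
decreasing_by
  have hi := i.isLt
  omega

/-- The multiplication `g ∘ h = (gh) mod_r f` of the Petit algebra `S_f`. -/
noncomputable def pmul {K : Type*} [Field K] (σ : K → K) {m : ℕ} (a : Fin m → K)
    (x y : Fin m → K) : Fin m → K :=
  ∑ i : Fin m, ∑ j : Fin m, (x i * σ^[(i : ℕ)] (y j)) • tred σ m a ((i : ℕ) + (j : ℕ))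

/-- The unit element `1` of `S_f`. -/
noncomputable def pone (K : Type*) [Field K] (m : ℕ) : Fin m → K :=
  fun i => if (i : ℕ) = 0 then 1 else 0

/-- The element `t` of `S_f`. -/
noncomputable def tvec (K : Type*) [Field K] (m : ℕ) : Fin m → K :=
  fun i => if (i : ℕ) = 1 then 1 else 0

/-- The canonical copy of `c ∈ K` inside `S_f`. -/
noncomputable def iota (K : Type*) [Field K] (m : ℕ) (c : K) : Fin m → K :=
  fun i => if (i : ℕ) = 0 then c else 0

/-- `S_f` is associative; by Petit's theorem this holds if and only if `f` is
invariant (i.e. `R·f` is a two-sided ideal of `R = K[t;σ]`). -/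
def PAssoc {K : Type*} [Field K] (σ : K → K) {m : ℕ} (a : Fin m → K) : Prop :=
  ∀ x y z : Fin m → K, pmul σ a (pmul σ a x y) z = pmul σ a x (pmul σ a y z)

/-- `H` is an automorphism of the algebra `S_f` over `F = Fix(σ)`: an `F`-linear
bijection preserving the multiplication and the unit. -/
structure IsPetitAut {K : Type*} [Field K] (σ : K → K) {m : ℕ} (a : Fin m → K)
    (H : (Fin m → K) → (Fin m → K)) : Prop where
  bijective : Function.Bijective H
  map_add : ∀ x y, H (x + y) = H x + H y
  map_smul : ∀ c : K, σ c = c → ∀ x, H (c • x) = c • H x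
  map_mul : ∀ x y, H (pmul σ a x y) = pmul σ a (H x) (H y)
  map_one : H (pone K m) = pone K m

/-- `H` is an inner automorphism `x ↦ (c_l ∘ x) ∘ c` of `S_f`, where `c_l` is a
left inverse of `c`. -/
def IsInnerPetit {K : Type*} [Field K] (σ : K → K) {m : ℕ} (a : Fin m → K)
    (H : (Fin m → K) → (Fin m → K)) : Prop :=
  ∃ c cl : Fin m → K, pmul σ a cl c = pone K m ∧
    ∀ x, H x = pmul σ a (pmul σ a cl x) c

/-- The map `H_{τ,k} : Σ x_i t^i ↦ τ(x_0) + Σ_{i≥1} τ(x_i)·(Π_{l<i} σ^l(k))·t^i`. -/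
noncomputable def Hmap {K : Type*} [Field K] (σ τ : K → K) {m : ℕ} (k : K)
    (x : Fin m → K) : Fin m → K :=
  fun i => τ (x i) * ∏ l ∈ Finset.range (i : ℕ), σ^[l] k

/-!
An automorphism `H` of `S_f` preserves the left nucleus, and for `f = t^m - a₀` with
`σ(a₀) ≠ a₀` the left nucleus is `K`, so `H` restricts to some `τ ∈ Gal(K/F)`. Applying
`H` to `t ∘ c = σ(c) ∘ t` shows that a nonzero coefficient of `t^j` in `H(t)` forces
`σ^{j-1} = 1`, which the bound `m - 1 ≤ ord σ` excludes unless `j = 1`; hence `H(t) = k t`,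
`H(t^i) = (∏_{l<i} σ^l(k)) t^i`, and `H(t^{m-1} ∘ t) = H(a₀)` is the condition
`τ(a₀) = (∏_{l<m} σ^l(k)) a₀`. Conversely `H_{τ,k}` respects products of monomials because
`τ` commutes with `σ`, and that condition is exactly what the reduction `t^m = a₀` requires.
Taking norms of the condition gives `N(k)^m = 1`, since `N` is invariant under `σ` and `τ`.
-/

open Finset

-- The monomial `t^s` of `S_f`; the zero vector when `s ≥ m`.
noncomputable def tpow (K : Type*) [Field K] (m s : ℕ) : Fin m → K :=
  fun i => if (i : ℕ) = s then 1 else 0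

section Petit

variable {K : Type*} [Field K] {m : ℕ}

lemma tvec_eq_tpow_one : tvec K m = tpow K m 1 := rfl

lemma pone_eq_tpow_zero : pone K m = tpow K m 0 := rfl

lemma tred_of_lt (σ : K → K) (a : Fin m → K) {s : ℕ} (h : s < m) :
    tred σ m a s = tpow K m s := by
  rw [tred, dif_pos h]; rfl

lemma sum_smul_tpow (x : Fin m → K) : ∑ i : Fin m, x i • tpow K m i = x := by
  ext r
  simp [tpow, Finset.sum_apply, Fin.val_inj]

lemma iota_eq_smul_tpow_zero (c : K) : iota K m c = c • tpow K m 0 := by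
  ext i; simp [iota, tpow]

lemma iota_injective (hm : 0 < m) : Function.Injective (iota K m) := fun c d h => by
  simpa [iota] using congrFun h ⟨0, hm⟩

lemma iota_add (c d : K) : iota K m (c + d) = iota K m c + iota K m d := by
  simp only [iota_eq_smul_tpow_zero, add_smul]

lemma iota_zero : iota K m 0 = 0 := by
  ext i; simp [iota]

lemma smul_pmul (σ : K → K) (a : Fin m → K) (b : K) (x y : Fin m → K) :
    pmul σ a (b • x) y = b • pmul σ a x y := by
  simp only [pmul, Finset.smul_sum, smul_smul, Pi.smul_apply, smul_eq_mul, mul_assoc]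

lemma iota_pmul (σ : K → K) (a : Fin m → K) (hm : 0 < m) (c : K) (y : Fin m → K) :
    pmul σ a (iota K m c) y = c • y := by
  rw [pmul, Fintype.sum_eq_single ⟨0, hm⟩]
  · conv_rhs => rw [← sum_smul_tpow y, Finset.smul_sum]
    simp [iota, tred_of_lt _ _ (Fin.isLt _), smul_smul]
  · simp +contextual [iota, ← Fin.val_inj]

lemma iota_pmul_iota (σ : K → K) (a : Fin m → K) (hm : 0 < m) (c d : K) :
    pmul σ a (iota K m c) (iota K m d) = iota K m (c * d) := by
  rw [iota_pmul σ a hm, iota_eq_smul_tpow_zero, iota_eq_smul_tpow_zero, smul_smul]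

variable {E : Type*} [FunLike E K K] [RingHomClass E K K] (σ : E) (a : Fin m → K)

lemma pmul_smul_tpow_smul_tpow (b c : K) {i j : ℕ} (hi : i < m) (hj : j < m) :
    pmul σ a (b • tpow K m i) (c • tpow K m j) = (b * σ^[i] c) • tred σ m a (i + j) := by
  rw [pmul, Fintype.sum_eq_single ⟨i, hi⟩, Fintype.sum_eq_single ⟨j, hj⟩] <;>
    simp +contextual [tpow, ← Fin.val_inj]

lemma pmul_tpow_tpow {i j : ℕ} (hi : i < m) (hj : j < m) :
    pmul σ a (tpow K m i) (tpow K m j) = tred σ m a (i + j) := by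
  simpa using pmul_smul_tpow_smul_tpow σ a 1 1 hi hj

lemma pmul_iota_apply (x : Fin m → K) (c : K) (r : Fin m) :
    pmul σ a x (iota K m c) r = x r * σ^[r] c := by
  have h : pmul σ a x (iota K m c) = ∑ i : Fin m, (x i * σ^[i] c) • tpow K m i := by
    refine Finset.sum_congr rfl fun i _ => ?_
    rw [Fintype.sum_eq_single ⟨0, r.pos⟩]
    · simp [iota, tred_of_lt _ _ i.isLt]
    · simp +contextual [iota, ← Fin.val_inj]
  rw [h, sum_smul_tpow (fun i => x i * σ^[i] c)]

lemma pmul_tpow (x : Fin m → K) {j : ℕ} (hj : j < m) :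
    pmul σ a x (tpow K m j) = ∑ i : Fin m, x i • tred σ m a (i + j) := by
  refine Finset.sum_congr rfl fun i _ => ?_
  rw [Fintype.sum_eq_single ⟨j, hj⟩] <;> simp +contextual [tpow, ← Fin.val_inj]

variable (a0 : K)

lemma tred_iota_of_le {s : ℕ} (h₁ : m ≤ s) (h₂ : s < 2 * m) :
    tred σ m (iota K m a0) s = σ^[s - m] a0 • tpow K m (s - m) := by
  rw [tred, dif_neg (by omega), Fintype.sum_eq_single ⟨0, by omega⟩]
  · simp [iota, tred_of_lt _ _ (show s - m < m by omega)]
  · simp +contextual [iota, ← Fin.val_inj]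

lemma tred_iota_apply {s : ℕ} (hs : s < 2 * m) (r : Fin m) :
    tred σ m (iota K m a0) s r = if s = r then 1 else if s = r + m then σ^[r] a0 else 0 := by
  rcases lt_or_ge s m with h | h
  · rw [tred_of_lt _ _ h]
    simp [tpow, eq_comm, show s ≠ r + m by omega]
  · rw [tred_iota_of_le σ a0 h hs]
    by_cases hsr : s = r + m
    · rw [if_neg (by omega), if_pos hsr]
      simp [tpow, hsr]
    · rw [if_neg (by omega), if_neg hsr]
      simp [tpow, show (r : ℕ) ≠ s - m by omega]

lemma pmul_tpow_apply (x : Fin m → K) {j : ℕ} (hj : j < m) (r : Fin m) :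
    pmul σ (iota K m a0) x (tpow K m j) r =
      if h : j ≤ r then x ⟨r - j, by omega⟩ else x ⟨r + m - j, by omega⟩ * σ^[r] a0 := by
  simp only [pmul_tpow σ _ x hj, Finset.sum_apply, Pi.smul_apply, smul_eq_mul]
  rw [Finset.sum_congr rfl fun i _ => by
    rw [tred_iota_apply σ a0 (by have := i.isLt; omega : (i : ℕ) + j < 2 * m)]]
  split_ifs with h
  · rw [Fintype.sum_eq_single ⟨r - j, by omega⟩]
    · simp [show r - j + j = (r : ℕ) by omega]
    · intro i hi
      have := Fin.val_ne_of_ne hi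
      rw [if_neg (by simp at this; omega), if_neg (by simp at this; omega), mul_zero]
  · rw [Fintype.sum_eq_single ⟨r + m - j, by omega⟩]
    · simp [show r + m - j + j = (r : ℕ) + m by omega]; omega
    · intro i hi
      have := Fin.val_ne_of_ne hi
      rw [if_neg (by simp at this; omega), if_neg (by simp at this; omega), mul_zero]

lemma tpow_pred_pmul_tvec (hm : 2 ≤ m) :
    pmul σ (iota K m a0) (tpow K m (m - 1)) (tvec K m) = iota K m a0 := by
  rw [tvec_eq_tpow_one, pmul_tpow_tpow σ _ (by omega) (by omega), Nat.sub_add_cancel (by omega),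
    tred_iota_of_le σ a0 le_rfl (by omega), Nat.sub_self, iota_eq_smul_tpow_zero,
    Function.iterate_zero_apply]

end Petit

section Iterate

variable {K : Type*} [Field K] {E : Type*} [FunLike E K K] [RingHomClass E K K] (σ : E) (k : K)

lemma prod_range_iterate_add (i j : ℕ) :
    ∏ l ∈ range (i + j), σ^[l] k =
      (∏ l ∈ range i, σ^[l] k) * σ^[i] (∏ l ∈ range j, σ^[l] k) := by
  induction j with
  | zero => simp
  | succ j ih =>
    rw [← add_assoc, prod_range_succ, ih, prod_range_succ, iterate_map_mul,
      ← Function.iterate_add_apply, mul_assoc]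

lemma prod_range_iterate_ne_zero (hk : k ≠ 0) (i : ℕ) : ∏ l ∈ range i, σ^[l] k ≠ 0 :=
  prod_ne_zero_iff.mpr fun l _ => (map_ne_zero ((σ : K →+* K) ^ l)).mpr hk

end Iterate

section Hmap

variable {K : Type*} [Field K] {m : ℕ} {E E' : Type*} [FunLike E K K] [EquivLike E' K K]

lemma Hmap_add [RingEquivClass E' K K] (σ : K → K) (τ : E') (k : K) (x y : Fin m → K) :
    Hmap σ τ k (x + y) = Hmap σ τ k x + Hmap σ τ k y := by
  ext i; simp [Hmap, add_mul]

lemma Hmap_smul_tpow [RingEquivClass E' K K] (σ : K → K) (τ : E') (k c : K) (s : ℕ) :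
    Hmap σ τ k (c • tpow K m s) = (τ c * ∏ l ∈ range s, σ^[l] k) • tpow K m s := by
  ext i
  by_cases h : (i : ℕ) = s <;> simp [Hmap, tpow, h]

lemma Hmap_bijective [RingHomClass E K K] (σ : E) (τ : E') {k : K} (hk : k ≠ 0) :
    Function.Bijective (Hmap σ τ k : (Fin m → K) → _) := by
  have hP := prod_range_iterate_ne_zero σ k hk
  refine ⟨fun x y h => funext fun i => EquivLike.injective τ ?_, fun z =>
    ⟨fun i => EquivLike.inv τ (z i / ∏ l ∈ range i, σ^[l] k), funext fun i => ?_⟩⟩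
  · exact mul_right_cancel₀ (hP i) (congrFun h i)
  · simp [Hmap, EquivLike.apply_inv_apply, div_mul_cancel₀ _ (hP i)]

variable [RingHomClass E K K] [RingEquivClass E' K K] (σ : E) (τ : E') {k a0 : K}

lemma Hmap_smul_tred (hcomm : Function.Commute σ τ)
    (hcond : τ a0 = (∏ l ∈ range m, σ^[l] k) * a0) (c : K) {s : ℕ} (hs : s < 2 * m) :
    Hmap σ τ k (c • tred σ m (iota K m a0) s) =
      (τ c * ∏ l ∈ range s, σ^[l] k) • tred σ m (iota K m a0) s := by
  rcases lt_or_ge s m with h | h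
  · rw [tred_of_lt _ _ h, Hmap_smul_tpow]
  · obtain ⟨s, rfl⟩ := Nat.exists_eq_add_of_le' h
    rw [tred_iota_of_le σ a0 h hs, Nat.add_sub_cancel, smul_smul, Hmap_smul_tpow, smul_smul,
      map_mul, ← (hcomm.iterate_left s).eq, hcond, iterate_map_mul, prod_range_iterate_add]
    ring_nf

lemma Hmap_pmul (hcomm : Function.Commute σ τ)
    (hcond : τ a0 = (∏ l ∈ range m, σ^[l] k) * a0) (x y : Fin m → K) :
    Hmap σ τ k (pmul σ (iota K m a0) x y) =
      pmul σ (iota K m a0) (Hmap σ τ k x) (Hmap σ τ k y) := by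
  let Φ : (Fin m → K) →+ (Fin m → K) := AddMonoidHom.mk' (Hmap σ τ k) (Hmap_add σ τ k)
  change Φ (pmul _ _ x y) = _
  simp only [pmul, map_sum]
  refine sum_congr rfl fun i _ => sum_congr rfl fun j _ => ?_
  rw [AddMonoidHom.mk'_apply, Hmap_smul_tred σ τ hcomm hcond _ (by omega)]
  simp only [Hmap, map_mul, ← (hcomm.iterate_left i).eq, prod_range_iterate_add, iterate_map_mul]
  ring_nf

theorem isPetitAut_Hmap (hcomm : Function.Commute σ τ)
    (hcond : τ a0 = (∏ l ∈ range m, σ^[l] k) * a0) (hk : k ≠ 0)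
    (hfix : ∀ c, σ c = c → τ c = c) :
    IsPetitAut σ (iota K m a0) (Hmap σ τ k) where
  bijective := Hmap_bijective σ τ hk
  map_add := Hmap_add σ τ k
  map_smul c hc x := by ext i; simp [Hmap, hfix c hc, mul_assoc]
  map_mul := Hmap_pmul σ τ hcomm hcond
  map_one := by ext i; by_cases h : (i : ℕ) = 0 <;> simp [Hmap, pone, h]

end Hmap

section Nucleus

variable {K : Type*} [Field K] {m : ℕ}

def MemLeftNucleus (σ : K → K) (a x : Fin m → K) : Prop :=
  ∀ y z, pmul σ a (pmul σ a x y) z = pmul σ a x (pmul σ a y z)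

lemma iota_memLeftNucleus (σ : K → K) (a : Fin m → K) (hm : 0 < m) (c : K) :
    MemLeftNucleus σ a (iota K m c) := fun y z => by
  rw [iota_pmul σ a hm, iota_pmul σ a hm, smul_pmul]

lemma IsPetitAut.memLeftNucleus {σ : K → K} {a : Fin m → K}
    {H : (Fin m → K) → (Fin m → K)} (hH : IsPetitAut σ a H) {x : Fin m → K}
    (hx : MemLeftNucleus σ a x) :
    MemLeftNucleus σ a (H x) := fun y z => by
  obtain ⟨y, rfl⟩ := hH.bijective.2 y
  obtain ⟨z, rfl⟩ := hH.bijective.2 z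
  simp only [← hH.map_mul, hx y z]

-- Test the associator on `(x, t^{m-1}, t)`: at a coordinate `r ≥ 1` it compares `σ^{r-1}(a₀)`
-- with `σ^r(a₀)`.
lemma eq_iota_of_memLeftNucleus {E : Type*} [FunLike E K K] [RingHomClass E K K] (σ : E)
    {a0 : K} (ha0 : σ a0 ≠ a0) (hm : 2 ≤ m) {x : Fin m → K}
    (hx : MemLeftNucleus σ (iota K m a0) x) : x = iota K m (x ⟨0, by omega⟩) := by
  ext r
  by_cases hr : (r : ℕ) = 0
  · simp [iota, show r = ⟨0, by omega⟩ from Fin.ext hr]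
  rw [iota, if_neg hr]
  by_contra hxr
  have h := congrFun (hx (tpow K m (m - 1)) (tpow K m 1)) r
  rw [← tvec_eq_tpow_one, tpow_pred_pmul_tvec σ a0 hm, pmul_iota_apply, tvec_eq_tpow_one,
    pmul_tpow_apply σ a0 _ (by omega), dif_pos (by omega), pmul_tpow_apply σ a0 _ (by omega),
    dif_neg (by simp; omega)] at h
  have hidx : (⟨r - 1 + m - (m - 1), by omega⟩ : Fin m) = r := Fin.ext (by simp; omega)
  have hsucc : (⇑σ)^[r] a0 = (⇑σ)^[r - 1] (σ a0) := by
    rw [← Function.iterate_succ_apply, Nat.succ_eq_add_one, Nat.sub_add_cancel (by omega)]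
  rw [hidx, Fin.val_mk, hsucc] at h
  exact ha0 ((RingHom.injective (σ : K →+* K)).iterate _ (mul_left_cancel₀ hxr h)).symm

end Nucleus

lemma eq_one_of_pow_eq_self {G : Type*} [Group G] {g : G} (hg : g ≠ 1) {m r : ℕ}
    (hord : m - 1 ≤ orderOf g) (hr : r < m) (h : g ^ r = g) : r = 1 := by
  rcases r with _ | _ | r
  · exact absurd (pow_zero g ▸ h).symm hg
  · rfl
  · have hpow : g ^ (r + 1) = 1 := mul_eq_right.mp (by rwa [← pow_succ])
    have := orderOf_le_of_pow_eq_one r.succ_pos hpow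
    omega

section Automorphisms

variable {K : Type*} [Field K] {m : ℕ} {H : (Fin m → K) → (Fin m → K)}

def IsPetitAut.toAddMonoidHom {σ : K → K} {a : Fin m → K} (hH : IsPetitAut σ a H) :
    (Fin m → K) →+ (Fin m → K) :=
  AddMonoidHom.mk' H hH.map_add

lemma IsPetitAut.map_zero {σ : K → K} {a : Fin m → K} (hH : IsPetitAut σ a H) : H 0 = 0 :=
  hH.toAddMonoidHom.map_zero

lemma IsPetitAut.apply_smul {σ : K → K} {a : Fin m → K} (hH : IsPetitAut σ a H) (hm : 0 < m)
    {τ : K → K} (hτ : ∀ c, H (iota K m c) = iota K m (τ c)) (c : K) (y : Fin m → K) :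
    H (c • y) = τ c • H y := by
  rw [← iota_pmul σ a hm, hH.map_mul, hτ, iota_pmul σ a hm]

lemma IsPetitAut.exists_algEquiv {F E : Type*} [Field F] [Algebra F K] [FiniteDimensional F K]
    [FunLike E K K] [AlgHomClass E F K K] {σ : E} {a0 : K} (hσa0 : σ a0 ≠ a0) (hm : 2 ≤ m)
    (hH : IsPetitAut σ (iota K m a0) H) :
    ∃ τ : K ≃ₐ[F] K, ∀ c, H (iota K m c) = iota K m (τ c) := by
  have hm0 : 0 < m := by omega
  obtain ⟨τ, hτ⟩ : ∃ τ : K → K, ∀ c, H (iota K m c) = iota K m (τ c) :=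
    ⟨_, fun c => eq_iota_of_memLeftNucleus σ hσa0 hm
      (hH.memLeftNucleus (iota_memLeftNucleus σ _ hm0 c))⟩
  let τ' : K →ₐ[F] K :=
    { toFun := τ
      map_one' := iota_injective hm0 <| by
        rw [← hτ, show iota K m 1 = pone K m from rfl, hH.map_one]
      map_mul' c d := iota_injective hm0 <| by
        rw [← hτ, ← iota_pmul_iota σ _ hm0 c d, hH.map_mul, hτ, hτ, iota_pmul_iota σ _ hm0]
      map_zero' := iota_injective hm0 <| by rw [← hτ, iota_zero, hH.map_zero]
      map_add' c d := iota_injective hm0 <| by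
        rw [← hτ, iota_add c d, hH.map_add, hτ, hτ, iota_add]
      commutes' s := iota_injective hm0 <| by
        rw [← hτ, iota_eq_smul_tpow_zero, ← pone_eq_tpow_zero,
          hH.map_smul _ (AlgHomClass.commutes σ s), hH.map_one] }
  exact ⟨AlgEquiv.ofBijective τ' (AlgHom.bijective τ'), hτ⟩

lemma IsPetitAut.apply_tpow {E : Type*} [FunLike E K K] [RingHomClass E K K] {σ : E}
    {a : Fin m → K} (hH : IsPetitAut σ a H) {k : K} (ht : H (tvec K m) = k • tpow K m 1)
    {i : ℕ} (hi : i < m) : H (tpow K m i) = (∏ l ∈ range i, σ^[l] k) • tpow K m i := by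
  induction i with
  | zero => rw [prod_range_zero, one_smul, ← pone_eq_tpow_zero, hH.map_one]
  | succ i ih =>
    have hsucc : tpow K m (i + 1) = pmul σ a (tpow K m i) (tvec K m) := by
      rw [tvec_eq_tpow_one, pmul_tpow_tpow σ a (by omega) (by omega), tred_of_lt σ a hi]
    conv_lhs => rw [hsucc, hH.map_mul, ht, ih (by omega)]
    rw [pmul_smul_tpow_smul_tpow σ a _ _ (by omega) (by omega), prod_range_succ,
      tred_of_lt σ a hi]

-- With `w = H(t)`, transporting `t ∘ c = σ(c) ∘ t` gives `w_r σ^r(b) = σ(b) w_r` for all `b`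
-- (`τ` is onto), so `w_r ≠ 0` forces `σ^r = σ`.
lemma IsPetitAut.exists_apply_tvec {F : Type*} [Field F] [Algebra F K] {σ : K ≃ₐ[F] K}
    (hσ : σ ≠ 1) (hm : 2 ≤ m) (hord : m - 1 ≤ orderOf σ) {a : Fin m → K}
    (hH : IsPetitAut σ a H) {τ : K → K} (hτs : Function.Surjective τ)
    (hcomm : Function.Commute σ τ) (hτ : ∀ c, H (iota K m c) = iota K m (τ c)) :
    ∃ k : K, k ≠ 0 ∧ H (tvec K m) = k • tpow K m 1 := by
  have hm0 : 0 < m := by omega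
  set w := H (tvec K m)
  have hrel (b : K) (r : Fin m) : w r * σ^[r] b = σ b * w r := by
    obtain ⟨c, rfl⟩ := hτs b
    have hswap : pmul σ a (tvec K m) (iota K m c) = pmul σ a (iota K m (σ c)) (tvec K m) := by
      ext r
      rw [iota_pmul σ a hm0, pmul_iota_apply]
      by_cases hr : (r : ℕ) = 1 <;> simp [tvec, hr]
    have h := congrFun (congrArg H hswap) r
    rwa [hH.map_mul, hH.map_mul, hτ, hτ, pmul_iota_apply, iota_pmul σ a hm0, ← hcomm.eq] at h
  have hvanish (r : Fin m) (hr : (r : ℕ) ≠ 1) : w r = 0 := by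
    by_contra hw
    refine hr (eq_one_of_pow_eq_self hσ hord r.isLt (AlgEquiv.ext fun b => ?_))
    rw [AlgEquiv.coe_pow]
    exact mul_left_cancel₀ hw ((hrel b r).trans (mul_comm _ _))
  have hw : w = w ⟨1, hm⟩ • tpow K m 1 := by
    ext r
    by_cases hr : (r : ℕ) = 1
    · simp [tpow, show r = ⟨1, hm⟩ from Fin.ext hr]
    · simp [tpow, hr, hvanish r hr]
  refine ⟨w ⟨1, hm⟩, fun h0 => ?_, hw⟩
  have ht : tvec K m = 0 := hH.bijective.1 (show w = H 0 by rw [hH.map_zero, hw, h0, zero_smul])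
  simpa [tvec] using congrFun ht ⟨1, hm⟩

theorem IsPetitAut.exists_eq_Hmap {F : Type*} [Field F] [Algebra F K] [FiniteDimensional F K]
    {σ : K ≃ₐ[F] K} (hσ : σ ≠ 1) (hm : 2 ≤ m) (hord : m - 1 ≤ orderOf σ)
    (hcomm : ∀ τ : K ≃ₐ[F] K, Function.Commute σ τ) {a0 : K} (hσa0 : σ a0 ≠ a0)
    (hH : IsPetitAut σ (iota K m a0) H) :
    ∃ (τ : K ≃ₐ[F] K) (k : K), k ≠ 0 ∧
      τ a0 = (∏ l ∈ range m, σ^[l] k) * a0 ∧ H = Hmap σ τ k := by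
  have hm0 : 0 < m := by omega
  obtain ⟨τ, hτ⟩ := hH.exists_algEquiv hσa0 hm
  obtain ⟨k, hk, ht⟩ := hH.exists_apply_tvec hσ hm hord τ.surjective (hcomm τ) hτ
  refine ⟨τ, k, hk, iota_injective hm0 ?_, funext fun x => ?_⟩
  · have h := congrArg H (tpow_pred_pmul_tvec σ a0 hm)
    rw [hH.map_mul, hH.apply_tpow ht (by omega), ht,
      pmul_smul_tpow_smul_tpow σ _ _ _ (by omega) (by omega), Nat.sub_add_cancel (by omega),
      tred_iota_of_le σ a0 le_rfl (by omega), hτ] at h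
    rw [← h, Nat.sub_self, Function.iterate_zero_apply, smul_smul, ← iota_eq_smul_tpow_zero,
      ← prod_range_succ, Nat.sub_add_cancel (by omega)]
  · conv_lhs => rw [← sum_smul_tpow x]
    conv_rhs => rw [← sum_smul_tpow (Hmap σ τ k x)]
    change hH.toAddMonoidHom _ = _
    rw [map_sum]
    refine sum_congr rfl fun i _ => ?_
    rw [IsPetitAut.toAddMonoidHom, AddMonoidHom.mk'_apply, hH.apply_smul hm0 hτ,
      hH.apply_tpow ht i.isLt, smul_smul]
    rfl

end Automorphisms

theorem norm_pow_eq_one_of_map_eq_prod_iterate_mul {F K : Type*} [Field F] [Field K]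
    [Algebra F K] [FiniteDimensional F K] (σ τ : K ≃ₐ[F] K) {m : ℕ} {a0 k : K}
    (ha0 : a0 ≠ 0) (h : τ a0 = (∏ l ∈ range m, σ^[l] k) * a0) :
    Algebra.norm F k ^ m = 1 := by
  have hN := congrArg (Algebra.norm F) h
  simp only [Algebra.norm_eq_of_algEquiv, map_mul, map_prod, ← AlgEquiv.coe_pow, prod_const,
    card_range] at hN
  exact (mul_eq_right₀ (Algebra.norm_ne_zero_iff.mpr ha0)).mp hN.symm

theorem stmt11_general {F K : Type*} [Field F] [Field K] [Algebra F K]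
    [FiniteDimensional F K]
    (σ : K ≃ₐ[F] K) (hσ : σ ≠ AlgEquiv.refl)
    (hfix : ∀ x : K, σ x = x ↔ x ∈ Set.range (algebraMap F K))
    (hcomm : ∀ (τ : K ≃ₐ[F] K) (x : K), σ (τ x) = τ (σ x))
    (m : ℕ) (hm : 2 ≤ m) (hord : m - 1 ≤ orderOf σ)
    (a0 : K) (ha0 : a0 ∉ Set.range (algebraMap F K)) :
    (∀ H : (Fin m → K) → (Fin m → K),
      IsPetitAut (⇑σ) (fun i : Fin m => if (i : ℕ) = 0 then a0 else 0) H ↔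
        ∃ (τ : K ≃ₐ[F] K) (k : K), k ≠ 0 ∧
          τ a0 = (∏ l ∈ Finset.range m, (⇑σ)^[l] k) * a0 ∧ H = Hmap (⇑σ) (⇑τ) k)
    ∧ (∀ (τ : K ≃ₐ[F] K) (k : K), k ≠ 0 →
        τ a0 = (∏ l ∈ Finset.range m, (⇑σ)^[l] k) * a0 → Algebra.norm F k ^ m = 1) := by
  -- the coefficient vector of `t^m - a₀` is `iota K m a0`
  change (∀ H, IsPetitAut σ (iota K m a0) H ↔ _) ∧ _
  have hσa0 : σ a0 ≠ a0 := fun h => ha0 ((hfix a0).1 h)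
  have ha0 : a0 ≠ 0 := by rintro rfl; exact hσa0 (map_zero σ)
  refine ⟨fun H => ⟨fun hH => hH.exists_eq_Hmap hσ hm hord hcomm hσa0, ?_⟩,
    fun τ k _ => norm_pow_eq_one_of_map_eq_prod_iterate_mul σ τ ha0⟩
  rintro ⟨τ, k, hk, hcond, rfl⟩
  refine isPetitAut_Hmap σ τ (hcomm τ) hcond hk fun c hc => ?_
  obtain ⟨s, rfl⟩ := (hfix c).1 hc
  exact τ.commutes s

/-- **Corollary 3.5.** Let `K/F` be finite Galois with norm `N_{K/F}`, `σ ∈ Gal(K/F)`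
of order `n ≥ m − 1` with `Fix(σ) = F`, commuting with every `τ ∈ Gal(K/F)`, and let
`f(t) = t^m − a₀` with `a₀ ∈ K∖F`.  Then `H ∈ Aut_F(S_f)` iff `H = H_{τ,k}` for some
`τ ∈ Gal(K/F)` and `k ∈ K^×` with `τ(a₀) = (Π_{l=0}^{m−1} σ^l(k))·a₀`; for any such
`k`, `N_{K/F}(k)` is an `m`-th root of unity. -/
theorem stmt11 {F K : Type*} [Field F] [Field K] [Algebra F K]
    [FiniteDimensional F K] [IsGalois F K]
    (σ : K ≃ₐ[F] K) (hσ : σ ≠ AlgEquiv.refl)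
    (hfix : ∀ x : K, σ x = x ↔ x ∈ Set.range (algebraMap F K))
    (hcomm : ∀ (τ : K ≃ₐ[F] K) (x : K), σ (τ x) = τ (σ x))
    (m : ℕ) (hm : 2 ≤ m) (hord : m - 1 ≤ orderOf σ)
    (a0 : K) (ha0 : a0 ∉ Set.range (algebraMap F K)) :
    (∀ H : (Fin m → K) → (Fin m → K),
      IsPetitAut (⇑σ) (fun i : Fin m => if (i : ℕ) = 0 then a0 else 0) H ↔
        ∃ (τ : K ≃ₐ[F] K) (k : K), k ≠ 0 ∧
          τ a0 = (∏ l ∈ Finset.range m, (⇑σ)^[l] k) * a0 ∧ H = Hmap (⇑σ) (⇑τ) k)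
    ∧ (∀ (τ : K ≃ₐ[F] K) (k : K), k ≠ 0 →
        τ a0 = (∏ l ∈ Finset.range m, (⇑σ)^[l] k) * a0 → Algebra.norm F k ^ m = 1) :=
  stmt11_general σ hσ hfix hcomm m hm hord a0 ha0
end

section
/- Let f(t) = t^m − Σ_{i=0}^{m−1} a_i t^i ∈ K[t;σ] be not invariant. For every c ∈ K^×, setting k = c^{−1}σ(c), the map H_{id,k} coincides with the inner automorphism G_c of S_f given by G_c(x) = (c^{−1} ∘ x) ∘ c; in particular, whenever H_{id,k} ∈ Aut_F(S_f) with k = c^{−1}σ(c) for some c ∈ K^×, it is an inner automorphism of S_f. -/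
lemma tred_of_lt_s12 {K : Type*} [Field K] (σ : K → K) {m : ℕ} (a : Fin m → K) {s : ℕ}
    (hs : s < m) : tred σ m a s = fun i : Fin m => if (i : ℕ) = s then (1 : K) else 0 := by
  rw [tred]; simp [hs]

lemma iter_map_zero {K : Type*} [Field K] (σ : K ≃+* K) (n : ℕ) : (⇑σ)^[n] 0 = 0 := by
  induction n with
  | zero => rfl
  | succ n ih => rw [Function.iterate_succ_apply', ih, map_zero]

lemma iter_map_mul {K : Type*} [Field K] (σ : K ≃+* K) (n : ℕ) (x y : K) :
    (⇑σ)^[n] (x * y) = (⇑σ)^[n] x * (⇑σ)^[n] y := by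
  induction n with
  | zero => rfl
  | succ n ih =>
    rw [Function.iterate_succ_apply', Function.iterate_succ_apply',
      Function.iterate_succ_apply', ih, map_mul]

lemma iter_map_inv {K : Type*} [Field K] (σ : K ≃+* K) (n : ℕ) (x : K) :
    (⇑σ)^[n] x⁻¹ = ((⇑σ)^[n] x)⁻¹ := by
  induction n with
  | zero => rfl
  | succ n ih =>
    rw [Function.iterate_succ_apply', Function.iterate_succ_apply', ih, map_inv₀]

lemma pmul_iota_left {K : Type*} [Field K] (σ : K → K) {m : ℕ} (hm : 0 < m)
    (a : Fin m → K) (c : K) (y : Fin m → K) :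
    pmul σ a (iota K m c) y = c • y := by
  funext p
  unfold pmul iota
  rw [Finset.sum_apply, Finset.sum_eq_single (⟨0, hm⟩ : Fin m)]
  · simp only [Finset.sum_apply, Pi.smul_apply, smul_eq_mul]
    rw [Finset.sum_eq_single p]
    · simp [tred_of_lt_s12 σ a p.isLt]
    · intro j _ hj
      rw [tred_of_lt_s12 σ a (by simpa using j.isLt : (0 : ℕ) + (j : ℕ) < m)]
      have : (p : ℕ) ≠ (0 : ℕ) + (j : ℕ) := by
        simpa [Fin.ext_iff, eq_comm] using hj
      simp only [zero_add] at this ⊢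
      simp [this]
    · simp
  · intro i _ hi
    have : (i : ℕ) ≠ 0 := by
      simpa [Fin.ext_iff] using hi
    simp [this]
  · simp

lemma pmul_iota_right {K : Type*} [Field K] (σ : K ≃+* K) {m : ℕ}
    (a : Fin m → K) (c : K) (y : Fin m → K) :
    pmul (⇑σ) a y (iota K m c) = fun i => y i * (⇑σ)^[(i : ℕ)] c := by
  funext p
  have hm : 0 < m := p.pos
  unfold pmul iota
  rw [Finset.sum_apply, Finset.sum_eq_single p]
  · simp only [Finset.sum_apply, Pi.smul_apply, smul_eq_mul]
    rw [Finset.sum_eq_single (⟨0, hm⟩ : Fin m)]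
    · simp [tred_of_lt_s12 (⇑σ) a p.isLt]
    · intro j _ hj
      have hj0 : (j : ℕ) ≠ 0 := by simpa [Fin.ext_iff] using hj
      simp [hj0, iter_map_zero σ]
    · simp
  · intro i _ hi
    simp only [Finset.sum_apply, Pi.smul_apply, smul_eq_mul]
    apply Finset.sum_eq_zero
    intro j _
    rcases eq_or_ne (j : ℕ) 0 with h0 | h0
    · rw [tred_of_lt_s12 (⇑σ) a (by omega : (i : ℕ) + (j : ℕ) < m)]
      have : (p : ℕ) ≠ (i : ℕ) + (j : ℕ) := by
        rw [h0]
        simpa [Fin.ext_iff, eq_comm] using hi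
      simp [this]
    · simp [h0, iter_map_zero σ]
  · simp

lemma iterate_ne_zero {K : Type*} [Field K] (σ : K ≃+* K) {c : K} (hc : c ≠ 0) (n : ℕ) :
    (⇑σ)^[n] c ≠ 0 := by
  induction n with
  | zero => simpa
  | succ n ih =>
    rw [Function.iterate_succ_apply']
    simpa using ih

lemma telescope {K : Type*} [Field K] (σ : K ≃+* K) {c : K} (hc : c ≠ 0) (n : ℕ) :
    ∏ l ∈ Finset.range n, (⇑σ)^[l] (c⁻¹ * σ c) = c⁻¹ * (⇑σ)^[n] c := by
  induction n with
  | zero => simp [inv_mul_cancel₀ hc]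
  | succ n ih =>
    rw [Finset.prod_range_succ, ih]
    have h1 : (⇑σ)^[n] (c⁻¹ * σ c) = ((⇑σ)^[n] c)⁻¹ * (⇑σ)^[n + 1] c := by
      rw [iter_map_mul σ, iter_map_inv σ, ← Function.iterate_succ_apply]
    rw [h1]
    have hn := iterate_ne_zero σ hc n
    field_simp

/-- **Lemma 4.1.** Let `f(t) = t^m − Σ_{i<m} a_i t^i ∈ K[t;σ]` be not invariant
(equivalently `S_f` not associative).  For every `c ∈ K^×`, with `k = c⁻¹σ(c)`, the
map `H_{id,k}` coincides with the inner automorphism `G_c : x ↦ (c⁻¹ ∘ x) ∘ c` of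
`S_f`; in particular `H_{id,k}` is an inner automorphism of `S_f`. -/
theorem stmt12 {K : Type*} [Field K] (σ : K ≃+* K) (hσ : σ ≠ RingEquiv.refl K)
    (m : ℕ) (hm : 2 ≤ m) (a : Fin m → K)
    (hna : ¬ PAssoc (⇑σ) a) :
    ∀ c : K, c ≠ 0 →
      (∀ x : Fin m → K,
        Hmap (⇑σ) (id : K → K) (c⁻¹ * σ c) x
          = pmul (⇑σ) a (pmul (⇑σ) a (iota K m c⁻¹) x) (iota K m c))
      ∧ IsInnerPetit (⇑σ) a (Hmap (⇑σ) (id : K → K) (c⁻¹ * σ c)) := by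
  intro c hc
  have hm0 : 0 < m := by omega
  have key : ∀ x : Fin m → K,
      Hmap (⇑σ) (id : K → K) (c⁻¹ * σ c) x
        = pmul (⇑σ) a (pmul (⇑σ) a (iota K m c⁻¹) x) (iota K m c) := by
    intro x
    rw [pmul_iota_left (⇑σ) hm0 a, pmul_iota_right σ a]
    funext i
    unfold Hmap
    rw [telescope σ hc]
    simp only [Pi.smul_apply, smul_eq_mul, id]
    ring
  refine ⟨key, ⟨iota K m c, iota K m c⁻¹, ?_, key⟩⟩
  rw [pmul_iota_left (⇑σ) hm0 a]
  funext i
  unfold iota pone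
  rcases eq_or_ne (i : ℕ) 0 with h | h <;> simp [h, inv_mul_cancel₀ hc]
end
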